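/- For all ν > -1/2 and x > 0, M_ν(x) ≤ Γ(ν+1/2)/Γ(ν+1) - (1 - e^(-x))/(√π (ν+1/2)), where M_ν(x) = (2/√π) ∫₀¹ (1-t²)^(ν-1/2) e^(-xt) dt. -/

import Mathlib

open Real MeasureTheory intervalIntegral

noncomputable def strM (ν x : ℝ) : ℝ :=
  2 / Real.sqrt Real.pi * ∫ t in (0:ℝ)..1, (1 - t ^ 2) ^ (ν - 1 / 2) * Real.exp (-x * t)

/-! The weight `(1 - t²)^(ν - 1/2)` is nonnegative and `t ↦ e^(-xt)` is convex, so on `[0, 1]` it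
lies below its chord `1 - t (1 - e^(-x))`. Integrating against the weight leaves the two moments
`∫₀¹ (1 - t²)^(ν - 1/2) dt = (√π / 2) Γ(ν + 1/2) / Γ(ν + 1)` (a Beta integral after `u = t²`) and
`∫₀¹ t (1 - t²)^(ν - 1/2) dt = 1 / (2ν + 1)`. -/

open Set

theorem Real.integral_rpow_mul_one_sub_rpow {a b : ℝ} (ha : 0 < a) (hb : 0 < b) :
    ∫ u in (0:ℝ)..1, u ^ (a - 1) * (1 - u) ^ (b - 1) = Gamma a * Gamma b / Gamma (a + b) := by
  have h := Complex.betaIntegral_eq_Gamma_mul_div a b (by simpa) (by simpa)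
  rw [Complex.betaIntegral] at h
  have hcongr : ∀ u ∈ uIcc (0:ℝ) 1, (u : ℂ) ^ ((a : ℂ) - 1) * (1 - (u : ℂ)) ^ ((b : ℂ) - 1)
      = ((u ^ (a - 1) * (1 - u) ^ (b - 1) : ℝ) : ℂ) := by
    intro u hu
    rw [uIcc_of_le zero_le_one] at hu
    rw [Complex.ofReal_mul, Complex.ofReal_cpow hu.1, Complex.ofReal_cpow (by linarith [hu.2])]
    push_cast
    rfl
  rw [integral_congr hcongr, integral_ofReal, ← Complex.ofReal_add, Complex.Gamma_ofReal,
    Complex.Gamma_ofReal, Complex.Gamma_ofReal] at h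
  exact_mod_cast h

theorem integral_comp_sq_mul_two_mul (g : ℝ → ℝ) :
    ∫ t in (0:ℝ)..1, g (t ^ 2) * (2 * t) = ∫ u in (0:ℝ)..1, g u := by
  have h := integral_comp_mul_deriv_of_deriv_nonneg (a := 0) (b := 1) (g := g)
    (f := fun t => t ^ 2) (f' := fun t => 2 * t) (by fun_prop)
    (fun t _ => by simpa using hasDerivAt_pow 2 t)
    (fun t ht => by simp only [min_eq_left zero_le_one] at ht; linarith [ht.1])
  simpa using h

theorem intervalIntegrable_one_sub_sq_rpow {p : ℝ} (hp : -1 < p) :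
    IntervalIntegrable (fun t : ℝ => (1 - t ^ 2) ^ p) volume 0 1 := by
  have h1 : IntervalIntegrable (fun t : ℝ => (1 - t) ^ p) volume 0 1 := by
    simpa using ((intervalIntegrable_rpow' (a := 0) (b := 1) hp).comp_sub_left 1).symm
  have h := h1.mul_continuousOn (g := fun t => (1 + t) ^ p) <| by
    refine ContinuousOn.rpow_const (by fun_prop) fun t ht => Or.inl ?_
    rw [uIcc_of_le zero_le_one] at ht
    linarith [ht.1]
  rw [intervalIntegrable_iff_integrableOn_Icc_of_le zero_le_one] at h ⊢
  refine h.congr_fun (fun t ht => ?_) measurableSet_Icc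
  show (1 - t) ^ p * (1 + t) ^ p = _
  rw [← mul_rpow (by linarith [ht.2]) (by linarith [ht.1])]
  ring_nf

theorem integral_mul_one_sub_sq_rpow {p : ℝ} (hp : -1 < p) :
    ∫ t in (0:ℝ)..1, t * (1 - t ^ 2) ^ p = 1 / (2 * (p + 1)) := by
  have hsub := integral_comp_sq_mul_two_mul (fun u => (1 - u) ^ p)
  have h_one_sub : ∫ u in (0:ℝ)..1, (1 - u) ^ p = 1 / (p + 1) := by
    rw [integral_comp_sub_left (fun u => u ^ p), sub_self, sub_zero,
      integral_rpow (Or.inl hp), one_rpow, zero_rpow (by linarith), sub_zero, one_div]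
  have hne : p + 1 ≠ 0 := by linarith
  calc ∫ t in (0:ℝ)..1, t * (1 - t ^ 2) ^ p
      = (∫ t in (0:ℝ)..1, (1 - t ^ 2) ^ p * (2 * t)) / 2 := by
        rw [← intervalIntegral.integral_div]; congr 1; ext t; ring
    _ = 1 / (2 * (p + 1)) := by rw [hsub, h_one_sub]; field_simp

theorem integral_one_sub_sq_rpow {p : ℝ} (hp : -1 < p) :
    ∫ t in (0:ℝ)..1, (1 - t ^ 2) ^ p = √π * Gamma (p + 1) / (2 * Gamma (p + 3 / 2)) := by
  have hsub := integral_comp_sq_mul_two_mul (fun u => u ^ (1 / 2 - 1 : ℝ) * (1 - u) ^ (p + 1 - 1))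
  rw [Real.integral_rpow_mul_one_sub_rpow one_half_pos (by linarith), Gamma_one_half_eq,
    show 1 / 2 + (p + 1) = p + 3 / 2 by ring] at hsub
  -- `0 ^ (-1/2) = 0` in Lean, so the integrands only agree for `t ≠ 0`
  have hae : ∀ᵐ t : ℝ, t ∈ uIoc 0 1 →
      (t ^ 2) ^ (1 / 2 - 1 : ℝ) * (1 - t ^ 2) ^ (p + 1 - 1) * (2 * t) = 2 * (1 - t ^ 2) ^ p := by
    refine Filter.Eventually.of_forall fun t ht => ?_
    rw [uIoc_of_le zero_le_one] at ht
    have hinv : (t ^ 2) ^ (1 / 2 - 1 : ℝ) = t⁻¹ := by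
      rw [← rpow_natCast, ← rpow_mul ht.1.le]
      norm_num [rpow_neg_one]
    rw [hinv, add_sub_cancel_right]
    field_simp [ht.1.ne']
  rw [integral_congr_ae hae, intervalIntegral.integral_const_mul] at hsub
  have hG : 0 < Gamma (p + 3 / 2) := Gamma_pos_of_pos (by linarith)
  rw [eq_div_iff hG.ne'] at hsub
  rw [eq_div_iff (by positivity)]
  linarith

theorem exp_mul_le_one_sub_add_mul_exp {t : ℝ} (ht : t ∈ Icc (0:ℝ) 1) (y : ℝ) :
    exp (t * y) ≤ 1 - t + t * exp y := by
  have h := convexOn_exp.2 (mem_univ 0) (mem_univ y) (sub_nonneg.2 ht.2) ht.1 (by ring)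
  simpa [smul_eq_mul] using h

theorem integral_mul_exp_neg_mul_le {w : ℝ → ℝ} (hw : IntervalIntegrable w volume 0 1)
    (hw_nonneg : ∀ t ∈ Icc (0:ℝ) 1, 0 ≤ w t) (x : ℝ) :
    ∫ t in (0:ℝ)..1, w t * exp (-x * t) ≤
      (∫ t in (0:ℝ)..1, w t) - (1 - exp (-x)) * ∫ t in (0:ℝ)..1, t * w t := by
  set c := 1 - exp (-x)
  have hpt : ∀ t ∈ Icc (0:ℝ) 1, w t * exp (-x * t) ≤ w t * (1 - c * t) := by
    intro t ht
    refine mul_le_mul_of_nonneg_left ?_ (hw_nonneg t ht)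
    calc exp (-x * t) = exp (t * -x) := by ring_nf
      _ ≤ 1 - t + t * exp (-x) := exp_mul_le_one_sub_add_mul_exp ht (-x)
      _ = 1 - c * t := by ring
  have htw : IntervalIntegrable (fun t => c * (t * w t)) volume 0 1 :=
    (hw.continuousOn_mul (by fun_prop)).const_mul c
  calc ∫ t in (0:ℝ)..1, w t * exp (-x * t)
      ≤ ∫ t in (0:ℝ)..1, w t * (1 - c * t) :=
        integral_mono_on zero_le_one (hw.mul_continuousOn (by fun_prop))
          (hw.mul_continuousOn (by fun_prop)) hpt
    _ = (∫ t in (0:ℝ)..1, w t) - c * ∫ t in (0:ℝ)..1, t * w t := by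
        rw [← intervalIntegral.integral_const_mul, ← intervalIntegral.integral_sub hw htw]
        congr 1; ext t; ring

theorem strM_upper_bound_general (ν x : ℝ) (hν : -1 / 2 < ν) :
    strM ν x ≤ Real.Gamma (ν + 1 / 2) / Real.Gamma (ν + 1) -
      (1 - Real.exp (-x)) / (Real.sqrt Real.pi * (ν + 1 / 2)) := by
  have hp : -1 < ν - 1 / 2 := by linarith
  have hw_nonneg : ∀ t ∈ Icc (0:ℝ) 1, 0 ≤ (1 - t ^ 2) ^ (ν - 1 / 2) := fun t ht =>
    rpow_nonneg (by nlinarith [ht.1, ht.2]) _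
  have hbound := integral_mul_exp_neg_mul_le (intervalIntegrable_one_sub_sq_rpow hp) hw_nonneg x
  rw [integral_one_sub_sq_rpow hp, integral_mul_one_sub_sq_rpow hp,
    show ν - 1 / 2 + 1 = ν + 1 / 2 by ring, show ν - 1 / 2 + 3 / 2 = ν + 1 by ring] at hbound
  have hπ : 0 < √π := sqrt_pos.2 pi_pos
  have hν' : 0 < ν + 1 / 2 := by linarith
  calc strM ν x
      ≤ 2 / √π * (√π * Gamma (ν + 1 / 2) / (2 * Gamma (ν + 1)) -
          (1 - exp (-x)) * (1 / (2 * (ν + 1 / 2)))) :=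
        mul_le_mul_of_nonneg_left hbound (by positivity)
    _ = _ := by field_simp

theorem strM_upper_bound (ν x : ℝ) (hν : -1 / 2 < ν) (hx : 0 < x) :
    strM ν x ≤ Real.Gamma (ν + 1 / 2) / Real.Gamma (ν + 1) -
      (1 - Real.exp (-x)) / (Real.sqrt Real.pi * (ν + 1 / 2)) :=
  strM_upper_bound_general ν x hν
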